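/- Let 0 < δ < 1 and A₀ ≥ 0. Suppose φ : [0,∞) → ℝ satisfies |φ(ξ)| ≤ 1 for all ξ ≥ 0 and A₀ · sin(ξ/2)² · φ(ξ)² ≤ 1 − δ for all ξ ≥ 0. Then for every real A with −1 + δ/2 ≤ A ≤ A₀ + δ/2 and every ξ ≥ 0, one has A·cos(ξ)·φ(ξ)² − (1/4)·A²·sin(ξ)²·φ(ξ)⁴ ≥ −1 + δ/2. -/
import Mathlib

lemma key (δ A₀ A c s : ℝ) (hδ0 : 0 < δ) (hδ1 : δ < 1) (hA₀ : 0 ≤ A₀)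
    (hc : 0 ≤ c) (hs : 0 ≤ s) (hcs : c + s ≤ 1) (hA0s : A₀ * s ≤ 1 - δ)
    (hA1 : -1 + δ / 2 ≤ A) (hA2 : A ≤ A₀ + δ / 2) :
    A * (c - s) - A ^ 2 * (c * s) ≥ -1 + δ / 2 := by
  have hc1 : c ≤ 1 := by linarith
  have hs1 : s ≤ 1 := by linarith
  have huc : 0 ≤ 1 + (-1 + δ/2) * c := by nlinarith
  have e1 : 0 ≤ (1 + (-1 + δ/2) * c) * (1 - (-1 + δ/2) * s) - δ/2 := by
    nlinarith [mul_nonneg huc (mul_nonneg (by linarith : (0:ℝ) ≤ 1 - δ/2) hs)]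
  have hf2 : 0 ≤ 1 - (A₀ + δ/2) * s := by nlinarith
  have e2 : 0 ≤ (1 + (A₀ + δ/2) * c) * (1 - (A₀ + δ/2) * s) - δ/2 := by
    nlinarith [mul_nonneg hf2 (mul_nonneg (by linarith : (0:ℝ) ≤ A₀ + δ/2) hc)]
  nlinarith [mul_nonneg (mul_nonneg hc hs) (mul_nonneg (by linarith : (0:ℝ) ≤ A - (-1 + δ/2)) (by linarith : (0:ℝ) ≤ A₀ + δ/2 - A)),
    mul_nonneg (by linarith : (0:ℝ) ≤ A₀ + δ/2 - A) e1,
    mul_nonneg (by linarith : (0:ℝ) ≤ A - (-1 + δ/2)) e2,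
    mul_nonneg hc hs]

/-- endpoint inequality for filter functions (Lemma 4.4 of the paper). -/
theorem stmt0 (δ A₀ : ℝ) (hδ0 : 0 < δ) (hδ1 : δ < 1) (hA₀ : 0 ≤ A₀)
    (φ : ℝ → ℝ)
    (hφbd : ∀ ξ : ℝ, 0 ≤ ξ → |φ ξ| ≤ 1)
    (hφ : ∀ ξ : ℝ, 0 ≤ ξ → A₀ * Real.sin (ξ / 2) ^ 2 * (φ ξ) ^ 2 ≤ 1 - δ) :
    ∀ A : ℝ, -1 + δ / 2 ≤ A → A ≤ A₀ + δ / 2 →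
      ∀ ξ : ℝ, 0 ≤ ξ →
        A * Real.cos ξ * (φ ξ) ^ 2 - (1 / 4) * A ^ 2 * Real.sin ξ ^ 2 * (φ ξ) ^ 4
          ≥ -1 + δ / 2 := by
  intro A hA1 hA2 ξ hξ
  have hcos : Real.cos ξ = Real.cos (ξ/2)^2 - Real.sin (ξ/2)^2 := by
    conv_lhs => rw [show ξ = 2 * (ξ/2) by ring, Real.cos_two_mul']
  have hsin : Real.sin ξ = 2 * Real.sin (ξ/2) * Real.cos (ξ/2) := by
    conv_lhs => rw [show ξ = 2 * (ξ/2) by ring, Real.sin_two_mul]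
  set c := Real.cos (ξ/2)^2 * (φ ξ)^2 with hcdef
  set s := Real.sin (ξ/2)^2 * (φ ξ)^2 with hsdef
  have hφ1 : (φ ξ)^2 ≤ 1 := by
    have := hφbd ξ hξ; nlinarith [abs_nonneg (φ ξ), sq_abs (φ ξ)]
  have hc : 0 ≤ c := by positivity
  have hs : 0 ≤ s := by positivity
  have hcs : c + s ≤ 1 := by
    have := Real.sin_sq_add_cos_sq (ξ/2)
    nlinarith
  have hA0s : A₀ * s ≤ 1 - δ := by
    have := hφ ξ hξ; rw [hsdef]; linarith [this]
  have h := key δ A₀ A c s hδ0 hδ1 hA₀ hc hs hcs hA0s hA1 hA2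
  calc A * Real.cos ξ * (φ ξ) ^ 2 - (1 / 4) * A ^ 2 * Real.sin ξ ^ 2 * (φ ξ) ^ 4
      = A * (c - s) - A ^ 2 * (c * s) := by rw [hcos, hsin, hcdef, hsdef]; ring
    _ ≥ -1 + δ / 2 := h
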